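/- Let T̂ ⊂ ℝ³ be the reference tetrahedron with vertices 0, e₁, e₂, e₃ and let w = ∇×u be a divergence-free polynomial vector field that vanishes on all four faces of T̂ (i.e. w = x₁x₂x₃(1−x₁−x₂−x₃)Φ with Φ ∈ P_{k−5}³). Then each component Φᵢ is divisible by xᵢ, so w = x₁x₂x₃(1−x₁−x₂−x₃)·(x₁Φ̃₁, x₂Φ̃₂, x₃Φ̃₃)ᵀ with Φ̃ᵢ ∈ P_{k−6}. -/
import Mathlib


open MvPolynomial

/-- The bubble `x₁x₂x₃(1 − x₁ − x₂ − x₃)` of the reference tetrahedron. -/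
noncomputable def bubble : MvPolynomial (Fin 3) ℝ :=
  X 0 * X 1 * X 2 * (1 - X 0 - X 1 - X 2)

/-- Substituting `X i := 0`. -/
noncomputable def setZero (i : Fin 3) :
    MvPolynomial (Fin 3) ℝ →ₐ[ℝ] MvPolynomial (Fin 3) ℝ :=
  aeval (Function.update X i 0)

lemma setZero_X_self (i : Fin 3) : setZero i (X i) = 0 := by
  simp [setZero]

lemma setZero_monomial (i : Fin 3) (m : Fin 3 →₀ ℕ) (c : ℝ) (h : m i = 0) :
    setZero i (monomial m c) = monomial m c := by
  rw [setZero, aeval_monomial, monomial_eq, algebraMap_eq]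
  congr 1
  apply Finsupp.prod_congr
  intro j hj
  rw [Function.update_of_ne]
  rintro rfl
  exact (Finsupp.mem_support_iff.mp hj) h

lemma setZero_fix (i : Fin 3) (r : MvPolynomial (Fin 3) ℝ)
    (h : ∀ m ∈ r.support, m i = 0) : setZero i r = r := by
  conv_lhs => rw [r.as_sum]
  rw [map_sum]
  conv_rhs => rw [r.as_sum]
  exact Finset.sum_congr rfl fun m hm => setZero_monomial i m _ (h m hm)

lemma X_dvd_of_setZero (i : Fin 3) (p : MvPolynomial (Fin 3) ℝ)
    (h : setZero i p = 0) : X i ∣ p := by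
  classical
  have h3 := modMonomial_add_divMonomial_single p i
  have hr : ∀ m ∈ (p.modMonomial (Finsupp.single i 1)).support, m i = 0 := by
    intro m hm
    by_contra hmi
    have hle : Finsupp.single i 1 ≤ m := by
      rwa [Finsupp.single_le_iff, Nat.one_le_iff_ne_zero]
    exact Finsupp.mem_support_iff.mp hm (coeff_modMonomial_of_le p hle)
  have h4 := congrArg (setZero i) h3
  rw [map_add, map_mul, setZero_X_self, zero_mul, add_zero,
    setZero_fix i _ hr, h] at h4
  rw [h4, zero_add] at h3
  exact ⟨_, h3.symm⟩

lemma totalDegree_X_mul_ge (i : Fin 3) (t : MvPolynomial (Fin 3) ℝ) (ht : t ≠ 0) :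
    t.totalDegree + 1 ≤ (X i * t).totalDegree := by
  classical
  obtain ⟨m, hm, hms⟩ := Finset.exists_mem_eq_sup t.support
    (support_nonempty.mpr ht) (fun m => m.sum fun _ e => e)
  have hmem : Finsupp.single i 1 + m ∈ (X i * t).support := by
    rw [support_X_mul]
    exact Finset.mem_map_of_mem _ hm
  have hle := le_totalDegree hmem
  have hsum : ((Finsupp.single i 1 + m).sum fun _ e => e)
      = 1 + (m.sum fun _ e => e) := by
    rw [Finsupp.sum_add_index' (fun _ => rfl) (fun _ _ _ => rfl),
      Finsupp.sum_single_index rfl]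
  rw [hsum] at hle
  rw [totalDegree, hms]
  omega

lemma eval_ne_zero_aux (a b : Fin 3) (hab : a ≠ b) :
    (X a * X b * (1 - X a - X b) : MvPolynomial (Fin 3) ℝ) ≠ 0 := by
  intro h
  have := congrArg (eval fun _ => (1/4 : ℝ)) h
  simp at this
  norm_num at this

/-- If `w = x₁x₂x₃(1−x₁−x₂−x₃)Φ` is divergence free with `Φ ∈ P_{k-5}³`, then each `Φᵢ`
is divisible by `xᵢ`, i.e. `w = x₁x₂x₃(1−x₁−x₂−x₃)(x₁Φ̃₁, x₂Φ̃₂, x₃Φ̃₃)` with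
`Φ̃ᵢ ∈ P_{k-6}`. -/
theorem bubble_factor_divergence_free (k : ℕ)
    (w Φ : Fin 3 → MvPolynomial (Fin 3) ℝ)
    (hdeg : ∀ i, (w i).totalDegree ≤ k - 1)
    (hdiv : ∑ i, pderiv i (w i) = 0)
    (hΦ : ∀ i, (Φ i).totalDegree ≤ k - 5)
    (hw : ∀ i, w i = bubble * Φ i) :
    ∃ Φt : Fin 3 → MvPolynomial (Fin 3) ℝ,
      (∀ i, (Φt i).totalDegree ≤ k - 6) ∧ ∀ i, w i = bubble * (X i * Φt i) := by
  classical
  simp only [hw] at hdiv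
  have hp0 : pderiv (0 : Fin 3) bubble
      = X 1 * X 2 * (1 - X 0 - X 1 - X 2) - X 0 * X 1 * X 2 := by
    simp [bubble, pderiv_mul, pderiv_X_self, pderiv_X_of_ne, map_sub, map_one]; ring
  have hp1 : pderiv (1 : Fin 3) bubble
      = X 0 * X 2 * (1 - X 0 - X 1 - X 2) - X 0 * X 1 * X 2 := by
    simp [bubble, pderiv_mul, pderiv_X_self, pderiv_X_of_ne, map_sub, map_one]; ring
  have hp2 : pderiv (2 : Fin 3) bubble
      = X 0 * X 1 * (1 - X 0 - X 1 - X 2) - X 0 * X 1 * X 2 := by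
    simp [bubble, pderiv_mul, pderiv_X_self, pderiv_X_of_ne, map_sub, map_one]; ring
  have hb : ∀ i : Fin 3, setZero i bubble = 0 := by
    intro i
    fin_cases i <;> simp [setZero, bubble, Function.update_apply]
  -- i = 0
  have key0 : setZero 0 (Φ 0) = 0 := by
    have hD := congrArg (setZero 0) hdiv
    rw [map_sum, map_zero, Fin.sum_univ_three] at hD
    simp only [pderiv_mul, map_add, map_mul] at hD
    have h00 : setZero 0 (pderiv (0:Fin 3) bubble) = X 1 * X 2 * (1 - X 1 - X 2) := by
      rw [hp0]; simp [setZero, Function.update_apply]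
    have h01 : setZero 0 (pderiv (1:Fin 3) bubble) = 0 := by
      rw [hp1]; simp [setZero, Function.update_apply]
    have h02 : setZero 0 (pderiv (2:Fin 3) bubble) = 0 := by
      rw [hp2]; simp [setZero, Function.update_apply]
    rw [hb 0, h00, h01, h02] at hD
    have hD' : (X 1 * X 2 * (1 - X 1 - X 2)) * setZero 0 (Φ 0) = 0 := by
      linear_combination hD
    rcases mul_eq_zero.mp hD' with h | h
    · exact absurd h (eval_ne_zero_aux 1 2 (by decide))
    · exact h
  -- i = 1
  have key1 : setZero 1 (Φ 1) = 0 := by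
    have hD := congrArg (setZero 1) hdiv
    rw [map_sum, map_zero, Fin.sum_univ_three] at hD
    simp only [pderiv_mul, map_add, map_mul] at hD
    have h10 : setZero 1 (pderiv (0:Fin 3) bubble) = 0 := by
      rw [hp0]; simp [setZero, Function.update_apply]
    have h11 : setZero 1 (pderiv (1:Fin 3) bubble) = X 0 * X 2 * (1 - X 0 - X 2) := by
      rw [hp1]; simp [setZero, Function.update_apply]
    have h12 : setZero 1 (pderiv (2:Fin 3) bubble) = 0 := by
      rw [hp2]; simp [setZero, Function.update_apply]
    rw [hb 1, h10, h11, h12] at hD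
    have hD' : (X 0 * X 2 * (1 - X 0 - X 2)) * setZero 1 (Φ 1) = 0 := by
      linear_combination hD
    rcases mul_eq_zero.mp hD' with h | h
    · exact absurd h (eval_ne_zero_aux 0 2 (by decide))
    · exact h
  -- i = 2
  have key2 : setZero 2 (Φ 2) = 0 := by
    have hD := congrArg (setZero 2) hdiv
    rw [map_sum, map_zero, Fin.sum_univ_three] at hD
    simp only [pderiv_mul, map_add, map_mul] at hD
    have h20 : setZero 2 (pderiv (0:Fin 3) bubble) = 0 := by
      rw [hp0]; simp [setZero, Function.update_apply]
    have h21 : setZero 2 (pderiv (1:Fin 3) bubble) = 0 := by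
      rw [hp1]; simp [setZero, Function.update_apply]
    have h22 : setZero 2 (pderiv (2:Fin 3) bubble) = X 0 * X 1 * (1 - X 0 - X 1) := by
      rw [hp2]; simp [setZero, Function.update_apply]
    rw [hb 2, h20, h21, h22] at hD
    have hD' : (X 0 * X 1 * (1 - X 0 - X 1)) * setZero 2 (Φ 2) = 0 := by
      linear_combination hD
    rcases mul_eq_zero.mp hD' with h | h
    · exact absurd h (eval_ne_zero_aux 0 1 (by decide))
    · exact h
  have key : ∀ i, X i ∣ Φ i := by
    intro i
    fin_cases i
    · exact X_dvd_of_setZero _ _ key0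
    · exact X_dvd_of_setZero _ _ key1
    · exact X_dvd_of_setZero _ _ key2
  choose t ht using key
  refine ⟨t, ?_, fun i => by rw [hw i, ht i]⟩
  intro i
  by_cases h0 : t i = 0
  · simp [h0]
  · have hle := hΦ i
    rw [ht i] at hle
    have := totalDegree_X_mul_ge i (t i) h0
    omega
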